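/- The set of indecomposable elements of Φ_l⁺ equals the set of those indecomposable elements of Φ⁺ that lie in Φ_l. (This expresses that the fundamental system of the Levi positive system equals the intersection of the fundamental system of the full positive system with the Levi root subsystem: Π_{b_l} = Π_b ∩ Φ_l.) -/

import Mathlib

/-!
Every element of `Φ⁺` has `f ≥ 0`, so a decomposition `α = β + γ` in `Φ⁺` of an `α` with
`f α = 0` forces `f β = f γ = 0`, i.e. `β, γ ∈ Φ_l⁺`. Hence for elements of `Φ_l`,
indecomposability in `Φ⁺` and in `Φ_l⁺` are the same condition.
-/

/-- `α` is an indecomposable element of `Ψ`: it belongs to `Ψ` and cannot be written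
as a sum `β + γ` with `β, γ ∈ Ψ`. -/
def IsIndecomposableIn {V : Type*} [AddCommGroup V] (Ψ : Set V) (α : V) : Prop :=
  α ∈ Ψ ∧ ¬∃ β ∈ Ψ, ∃ γ ∈ Ψ, α = β + γ

namespace IsIndecomposableIn

variable {V M : Type*} [AddCommGroup V] [AddCommMonoid M] [PartialOrder M]
  {f : V →+ M} {Ψ S : Set V}

lemma mem_of_mem_union_of_map_eq_zero (hS : ∀ x ∈ S, 0 < f x) {x : V} (hx : x ∈ Ψ ∪ S)
    (hfx : f x = 0) : x ∈ Ψ :=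
  hx.resolve_right fun h ↦ (hS x h).ne' hfx

lemma map_nonneg_of_mem_union (hΨ : ∀ x ∈ Ψ, f x = 0) (hS : ∀ x ∈ S, 0 < f x) {x : V}
    (hx : x ∈ Ψ ∪ S) : 0 ≤ f x :=
  hx.elim (fun h ↦ (hΨ x h).ge) fun h ↦ (hS x h).le

theorem union_iff_of_map_eq_zero [IsOrderedAddMonoid M] (hΨ : ∀ x ∈ Ψ, f x = 0) (hS : ∀ x ∈ S, 0 < f x)
    {α : V} (hα : f α = 0) : IsIndecomposableIn (Ψ ∪ S) α ↔ IsIndecomposableIn Ψ α := by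
  refine ⟨fun ⟨hmem, hdec⟩ ↦ ⟨mem_of_mem_union_of_map_eq_zero hS hmem hα, ?_⟩,
    fun ⟨hmem, hdec⟩ ↦ ⟨Or.inl hmem, ?_⟩⟩
  · rintro ⟨β, hβ, γ, hγ, rfl⟩
    exact hdec ⟨β, Or.inl hβ, γ, Or.inl hγ, rfl⟩
  · rintro ⟨β, hβ, γ, hγ, rfl⟩
    obtain ⟨hfβ, hfγ⟩ := (add_eq_zero_iff_of_nonneg (map_nonneg_of_mem_union hΨ hS hβ)
      (map_nonneg_of_mem_union hΨ hS hγ)).mp (by rwa [← map_add])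
    exact hdec ⟨β, mem_of_mem_union_of_map_eq_zero hS hβ hfβ,
      γ, mem_of_mem_union_of_map_eq_zero hS hγ hfγ, rfl⟩

end IsIndecomposableIn

theorem statement19_general (V : Type*) [AddCommGroup V] [Module ℝ V]
    (Φ : Set V) (f : V →ₗ[ℝ] ℝ)
    (Φlp : Set V) (hΦlp : Φlp ⊆ {α ∈ Φ | f α = 0}) :
    {α | IsIndecomposableIn Φlp α}
      = {α | IsIndecomposableIn (Φlp ∪ {α ∈ Φ | 0 < f α}) α} ∩ {α ∈ Φ | f α = 0} := by
  have key {α : V} (hα : f α = 0) :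
      IsIndecomposableIn (Φlp ∪ {α ∈ Φ | 0 < f α}) α ↔ IsIndecomposableIn Φlp α :=
    IsIndecomposableIn.union_iff_of_map_eq_zero (f := f.toAddMonoidHom) (fun _ hx ↦ (hΦlp hx).2)
      (fun _ hx ↦ hx.2) hα
  ext α
  constructor
  · intro h
    have hαl := hΦlp h.1
    exact ⟨(key hαl.2).mpr h, hαl⟩
  · rintro ⟨h, -, hα⟩
    exact (key hα).mp h

/-- Let `Φ` be a set of nonzero vectors in a real vector space `V`, let
`f` be a linear functional on `V`, let `Φ_l := {α ∈ Φ | f α = 0}`, let `Φ_l⁺` be an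
arbitrary subset of `Φ_l`, and let `Φ⁺ := Φ_l⁺ ∪ {α ∈ Φ | f α > 0}`.  Then the set of
indecomposable elements of `Φ_l⁺` equals the intersection of the set of indecomposable
elements of `Φ⁺` with `Φ_l`. -/
theorem statement19 (V : Type*) [AddCommGroup V] [Module ℝ V]
    (Φ : Set V) (hΦ : (0 : V) ∉ Φ) (f : V →ₗ[ℝ] ℝ)
    (Φlp : Set V) (hΦlp : Φlp ⊆ {α ∈ Φ | f α = 0}) :
    {α | IsIndecomposableIn Φlp α}
      = {α | IsIndecomposableIn (Φlp ∪ {α ∈ Φ | 0 < f α}) α} ∩ {α ∈ Φ | f α = 0} :=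
  statement19_general V Φ f Φlp hΦlp
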